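/- Let Q, B be normed spaces and Z_q, Z_b be normed spaces (the latent spaces). Let E_b : B → Z_b be Lipschitz with constant L_b ≥ 0, D_q : Z_q → Q be Lipschitz with constant L_q ≥ 0, E_q : Q → Z_q and D_b : Z_b → B be arbitrary maps, and M : Z_q → Z_b, M† : Z_b → Z_q be continuous linear maps. Fix q ∈ Q and b ∈ B, set b̄ = D_b(M(E_q(q))) and q̂ = D_q(M†(E_b(b))), and assume ‖b̄ − b‖ ≤ δ for some δ ≥ 0. Assume there exist constants ξ_b, ξ_M, ξ_q ≥ 0 such that ‖E_b(D_b(z_b)) − z_b‖ ≤ ξ_b for all z_b ∈ Z_b, ‖M†(M(z_q)) − z_q‖ ≤ ξ_M for all z_q ∈ Z_q, and ‖D_q(E_q(x)) − x‖ ≤ ξ_q for all x ∈ Q. Then ‖q̂ − q‖ ≤ L_q·(‖M†‖·(L_b·δ + ξ_b) + ξ_M) + ξ_q, where ‖M†‖ is the operator norm of M†. -/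
import Mathlib


/-- Theorem 3 of the paper: full model error bound for the paired autoencoder. -/
theorem paired_autoencoder_model_error_bound
    {Q B Zq Zb : Type*}
    [NormedAddCommGroup Q] [NormedSpace ℝ Q]
    [NormedAddCommGroup B] [NormedSpace ℝ B]
    [NormedAddCommGroup Zq] [NormedSpace ℝ Zq]
    [NormedAddCommGroup Zb] [NormedSpace ℝ Zb]
    (Eb : B → Zb) (Dq : Zq → Q) (Eq' : Q → Zq) (Db : Zb → B)
    (M : Zq →L[ℝ] Zb) (Mdag : Zb →L[ℝ] Zq)
    (Lb Lq : ℝ) (hLb : 0 ≤ Lb) (hLq : 0 ≤ Lq)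
    (hLipEb : ∀ x y : B, ‖Eb x - Eb y‖ ≤ Lb * ‖x - y‖)
    (hLipDq : ∀ x y : Zq, ‖Dq x - Dq y‖ ≤ Lq * ‖x - y‖)
    (q : Q) (b : B) (δ : ℝ) (hδ : 0 ≤ δ)
    (hbbar : ‖Db (M (Eq' q)) - b‖ ≤ δ)
    (ξb ξM ξq : ℝ) (hξb : 0 ≤ ξb) (hξM : 0 ≤ ξM) (hξq : 0 ≤ ξq)
    (hb : ∀ zb : Zb, ‖Eb (Db zb) - zb‖ ≤ ξb)
    (hM : ∀ zq : Zq, ‖Mdag (M zq) - zq‖ ≤ ξM)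
    (hq : ∀ x : Q, ‖Dq (Eq' x) - x‖ ≤ ξq) :
    ‖Dq (Mdag (Eb b)) - q‖ ≤ Lq * (‖Mdag‖ * (Lb * δ + ξb) + ξM) + ξq := by
  have h1 : ‖Eb b - M (Eq' q)‖ ≤ Lb * δ + ξb := by
    calc ‖Eb b - M (Eq' q)‖
        ≤ ‖Eb b - Eb (Db (M (Eq' q)))‖ + ‖Eb (Db (M (Eq' q))) - M (Eq' q)‖ :=
          norm_sub_le_norm_sub_add_norm_sub _ _ _
      _ ≤ Lb * δ + ξb := by
          gcongr
          · calc ‖Eb b - Eb (Db (M (Eq' q)))‖ ≤ Lb * ‖b - Db (M (Eq' q))‖ := hLipEb _ _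
              _ ≤ Lb * δ := by
                  gcongr
                  rw [norm_sub_rev]; exact hbbar
          · exact hb _
  have h2 : ‖Mdag (Eb b) - Eq' q‖ ≤ ‖Mdag‖ * (Lb * δ + ξb) + ξM := by
    calc ‖Mdag (Eb b) - Eq' q‖
        ≤ ‖Mdag (Eb b) - Mdag (M (Eq' q))‖ + ‖Mdag (M (Eq' q)) - Eq' q‖ :=
          norm_sub_le_norm_sub_add_norm_sub _ _ _
      _ ≤ ‖Mdag‖ * (Lb * δ + ξb) + ξM := by
          gcongr
          · calc ‖Mdag (Eb b) - Mdag (M (Eq' q))‖ = ‖Mdag (Eb b - M (Eq' q))‖ := by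
                  rw [map_sub]
              _ ≤ ‖Mdag‖ * ‖Eb b - M (Eq' q)‖ := Mdag.le_opNorm _
              _ ≤ ‖Mdag‖ * (Lb * δ + ξb) := mul_le_mul_of_nonneg_left h1 (norm_nonneg _)
          · exact hM _
  calc ‖Dq (Mdag (Eb b)) - q‖
      ≤ ‖Dq (Mdag (Eb b)) - Dq (Eq' q)‖ + ‖Dq (Eq' q) - q‖ :=
        norm_sub_le_norm_sub_add_norm_sub _ _ _
    _ ≤ Lq * (‖Mdag‖ * (Lb * δ + ξb) + ξM) + ξq := by
        gcongr
        · calc ‖Dq (Mdag (Eb b)) - Dq (Eq' q)‖ ≤ Lq * ‖Mdag (Eb b) - Eq' q‖ := hLipDq _ _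
            _ ≤ Lq * (‖Mdag‖ * (Lb * δ + ξb) + ξM) := by gcongr
        · exact hq _
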